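/- Let K₁/k and K₂/k be finite Galois extensions inside a common field with Gal(K₁/k) ≅ S_n and Gal(K₂/k) ≅ S_m where n, m ≥ 5 and n ≠ m. If K₁ ∩ K₂ strictly contains k, then K₁ ∩ K₂ is the unique quadratic subextension of both K₁/k and K₂/k; hence if the unique quadratic subextensions of K₁/k and K₂/k are distinct, then K₁ ∩ K₂ = k and Gal(K₁K₂/K₂) ≅ S_n. -/

import Mathlib

open Equiv Equiv.Perm in
lemma aux_alternating_le_normal {α : Type*} [DecidableEq α] [Fintype α]
    (h5 : 5 ≤ Fintype.card α) (N : Subgroup (Perm α)) [hNn : N.Normal] (hN : N ≠ ⊥) :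
    alternatingGroup α ≤ N := by
  have key : ∃ f ∈ N, IsThreeCycle f := by
    obtain ⟨⟨σ, hσN⟩, hσ⟩ := Subgroup.ne_bot_iff_exists_ne_one.1 hN
    rw [ne_eq, Subtype.ext_iff] at hσ
    simp only [Subgroup.coe_one] at hσ
    obtain ⟨a, ha⟩ : ∃ a, σ a ≠ a := by
      by_contra h
      push_neg at h
      exact hσ (Equiv.ext h)
    set b := σ a with hb
    have hba : b ≠ a := ha
    obtain ⟨c, hc⟩ : ∃ c, c ∉ ({a, b} : Finset α) := by
      by_contra h
      push_neg at h
      have h2 := Finset.card_le_card (fun x _ => h x : (Finset.univ : Finset α) ⊆ {a, b})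
      have h3 : ({a, b} : Finset α).card ≤ 2 := (Finset.card_insert_le _ _).trans (by simp)
      simp only [Finset.card_univ] at h2
      omega
    simp only [Finset.mem_insert, Finset.mem_singleton, not_or] at hc
    obtain ⟨hca, hcb⟩ := hc
    set d := σ c with hd
    have hdb : d ≠ b := fun h => hca (σ.injective h)
    have hγN : swap b d * swap a c ∈ N := by
      have h1 : σ * (swap a c * σ⁻¹ * (swap a c)⁻¹) ∈ N :=
        N.mul_mem hσN (hNn.conj_mem _ (N.inv_mem hσN) _)
      have h2 : swap b d * swap a c = σ * (swap a c * σ⁻¹ * (swap a c)⁻¹) := by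
        rw [hb, hd, Equiv.swap_apply_apply, swap_inv]
        group
      rwa [h2]
    rcases eq_or_ne d a with hda | hda
    · exact ⟨_, hγN, by
        rw [hda, swap_comm b a]
        exact isThreeCycle_swap_mul_swap_same (Ne.symm hba) (Ne.symm hca) (Ne.symm hcb)⟩
    · rcases eq_or_ne d c with hdc | hdc
      · exact ⟨_, hγN, by
          rw [hdc, swap_comm b c, swap_comm a c]
          exact isThreeCycle_swap_mul_swap_same hcb hca hba⟩
      · obtain ⟨t, ht⟩ : ∃ t, t ∉ ({a, b, c, d} : Finset α) := by
          by_contra h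
          push_neg at h
          have h2 := Finset.card_le_card (fun x _ => h x :
            (Finset.univ : Finset α) ⊆ {a, b, c, d})
          have h3 : ({a, b, c, d} : Finset α).card ≤ 4 := by
            refine (Finset.card_insert_le _ _).trans (Nat.succ_le_succ ?_)
            refine (Finset.card_insert_le _ _).trans (Nat.succ_le_succ ?_)
            exact (Finset.card_insert_le _ _).trans (by simp)
          simp only [Finset.card_univ] at h2
          omega
        simp only [Finset.mem_insert, Finset.mem_singleton, not_or] at ht
        obtain ⟨hta, htb, htc, htd⟩ := ht
        set γ := swap b d * swap a c with hγ
        have hδN : swap b t * γ * (swap b t)⁻¹ * γ⁻¹ ∈ N :=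
          N.mul_mem (hNn.conj_mem _ hγN _) (N.inv_mem hγN)
        have hcompute : swap b t * γ * (swap b t)⁻¹ * γ⁻¹ = swap t d * swap b d := by
          have e1 : swap b t * swap b d * (swap b t)⁻¹ = swap t d := by
            rw [← Equiv.swap_apply_apply (swap b t) b d, swap_apply_left,
              swap_apply_of_ne_of_ne hdb (Ne.symm htd)]
          have e2 : swap b t * swap a c * (swap b t)⁻¹ = swap a c := by
            rw [← Equiv.swap_apply_apply (swap b t) a c,
              swap_apply_of_ne_of_ne (Ne.symm hba) (Ne.symm hta),
              swap_apply_of_ne_of_ne hcb (Ne.symm htc)]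
          have e3 : γ⁻¹ = swap a c * swap b d := by
            rw [hγ, mul_inv_rev, swap_inv, swap_inv]
          rw [e3, hγ]
          calc swap b t * (swap b d * swap a c) * (swap b t)⁻¹ * (swap a c * swap b d)
              = (swap b t * swap b d * (swap b t)⁻¹) *
                ((swap b t * swap a c * (swap b t)⁻¹) * swap a c) * swap b d := by
                group
            _ = swap t d * swap b d := by rw [e1, e2, swap_mul_self, mul_one]
        rw [hcompute] at hδN
        refine ⟨_, hδN, ?_⟩
        rw [swap_comm t d, swap_comm b d]
        exact isThreeCycle_swap_mul_swap_same (Ne.symm htd) hdb htb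
  obtain ⟨f, hfN, hf3⟩ := key
  rw [← closure_three_cycles_eq_alternating, Subgroup.closure_le]
  intro g hg
  have hconj : IsConj f g := isConj_iff_cycleType_eq.2 (hf3.trans hg.symm)
  obtain ⟨cc, hcc⟩ := isConj_iff.1 hconj
  rw [← hcc]
  exact hNn.conj_mem _ hfN _


lemma aux_card_quotient_perm {α : Type*} [DecidableEq α] [Fintype α]
    (h5 : 5 ≤ Fintype.card α) {G : Type*} [Group G] (f : Equiv.Perm α →* G)
    (hf : Function.Surjective f) :
    Nat.card G = (Fintype.card α).factorial ∨ Nat.card G ∣ 2 := by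
  have hcard : Nat.card G = f.ker.index := by
    rw [Subgroup.index, Nat.card_congr
      (QuotientGroup.quotientKerEquivOfSurjective f hf).toEquiv.symm]
  rcases eq_or_ne f.ker ⊥ with h | h
  · left
    rw [hcard, h, Subgroup.index_bot, Nat.card_eq_fintype_card, Fintype.card_perm]
  · right
    have hle := aux_alternating_le_normal h5 f.ker h
    have hdvd := Subgroup.index_dvd_of_le hle
    have hA : (alternatingGroup α).index = 2 := by
      haveI : Nontrivial α := by
        rw [← Fintype.one_lt_card_iff_nontrivial]; omega
      have h1 := Subgroup.index_mul_card (alternatingGroup α)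
      have h2 := two_mul_card_alternatingGroup (α := α)
      have h3 : 0 < Nat.card (alternatingGroup α) := Nat.card_pos
      simp only [Nat.card_eq_fintype_card] at h1 h3
      have h4 : (alternatingGroup α).index * Fintype.card ↥(alternatingGroup α) =
          2 * Fintype.card ↥(alternatingGroup α) := by rw [h1, h2]
      exact Nat.eq_of_mul_eq_mul_right h3 h4
    rw [hcard]
    rw [hA] at hdvd
    exact hdvd

section FieldAux

variable {k Ω : Type*} [Field k] [Field Ω] [Algebra k Ω]

lemma aux_restrict_surjective (K E : IntermediateField k Ω) (hle : E ≤ K)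
    [Normal k ↥K] [Normal k ↥E] :
    ∃ φ : (↥K ≃ₐ[k] ↥K) →* (↥E ≃ₐ[k] ↥E), Function.Surjective φ := by
  letI : Algebra ↥E ↥K := (IntermediateField.inclusion hle).toRingHom.toAlgebra
  letI : IsScalarTower k ↥E ↥K := IsScalarTower.of_algebraMap_eq (fun x => rfl)
  exact ⟨AlgEquiv.restrictNormalHom ↥E, AlgEquiv.restrictNormalHom_surjective ↥K⟩

end FieldAux

set_option maxHeartbeats 1000000 in
set_option synthInstance.maxHeartbeats 400000 in
/-- Let `K₁/k`, `K₂/k` be finite Galois extensions inside a common field with groups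
`S_n`, `S_m` (`n, m ≥ 5`, `n ≠ m`). If `K₁ ∩ K₂` strictly contains `k`, then it is the
unique quadratic subextension of both; hence if the quadratic subextensions of `K₁/k`
and `K₂/k` are distinct, then `K₁ ∩ K₂ = k` and `Gal(K₁K₂/K₂) ≅ S_n`. -/
theorem intersection_of_symmetric_galois_extensions
    {k Ω : Type*} [Field k] [Field Ω] [Algebra k Ω]
    (n m : ℕ) (hn : 5 ≤ n) (hm : 5 ≤ m) (hnm : n ≠ m)
    (K₁ K₂ : IntermediateField k Ω)
    [FiniteDimensional k K₁] [FiniteDimensional k K₂]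
    [IsGalois k K₁] [IsGalois k K₂]
    (e₁ : (K₁ ≃ₐ[k] K₁) ≃* Equiv.Perm (Fin n))
    (e₂ : (K₂ ≃ₐ[k] K₂) ≃* Equiv.Perm (Fin m)) :
    (⊥ < K₁ ⊓ K₂ → Module.finrank k ↥(K₁ ⊓ K₂) = 2) ∧
    ((∀ Q₁ Q₂ : IntermediateField k Ω, Q₁ ≤ K₁ → Q₂ ≤ K₂ →
        Module.finrank k Q₁ = 2 → Module.finrank k Q₂ = 2 → Q₁ ≠ Q₂) →
      K₁ ⊓ K₂ = ⊥ ∧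
        Nonempty
          ((↥(IntermediateField.extendScalars (le_sup_right : K₂ ≤ K₁ ⊔ K₂)) ≃ₐ[↥K₂]
              ↥(IntermediateField.extendScalars (le_sup_right : K₂ ≤ K₁ ⊔ K₂))) ≃*
            Equiv.Perm (Fin n))) := by
  classical
  have hcard2 : ⊥ < K₁ ⊓ K₂ → Module.finrank k ↥(K₁ ⊓ K₂) = 2 := by
    intro hlt
    obtain ⟨φ₁, hφ₁⟩ := aux_restrict_surjective K₁ (K₁ ⊓ K₂) inf_le_left
    obtain ⟨φ₂, hφ₂⟩ := aux_restrict_surjective K₂ (K₁ ⊓ K₂) inf_le_right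
    have h1 := aux_card_quotient_perm (by simp; omega : 5 ≤ Fintype.card (Fin n))
      (φ₁.comp e₁.symm.toMonoidHom) (hφ₁.comp e₁.symm.surjective)
    have h2 := aux_card_quotient_perm (by simp; omega : 5 ≤ Fintype.card (Fin m))
      (φ₂.comp e₂.symm.toMonoidHom) (hφ₂.comp e₂.symm.surjective)
    simp only [Fintype.card_fin] at h1 h2
    have hfr : Nat.card (↥(K₁ ⊓ K₂) ≃ₐ[k] ↥(K₁ ⊓ K₂)) = Module.finrank k ↥(K₁ ⊓ K₂) := by
      rw [IsGalois.card_aut_eq_finrank]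
    have hdvd : Module.finrank k ↥(K₁ ⊓ K₂) ∣ 2 := by
      rw [← hfr]
      rcases h1 with h1 | h1
      · rcases h2 with h2 | h2
        · exfalso
          have hfac : n.factorial = m.factorial := h1.symm.trans h2
          rcases lt_trichotomy n m with h | h | h
          · exact absurd hfac (Nat.ne_of_lt ((Nat.factorial_lt (by omega)).2 h))
          · exact hnm h
          · exact absurd hfac.symm (Nat.ne_of_lt ((Nat.factorial_lt (by omega)).2 h))
        · exfalso
          have h120 : Nat.factorial 5 ≤ n.factorial := Nat.factorial_le hn
          have := Nat.le_of_dvd (by norm_num) (h1 ▸ h2)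
          simp [Nat.factorial] at h120
          omega
      · exact h1
    have hne1 : Module.finrank k ↥(K₁ ⊓ K₂) ≠ 1 := by
      rw [ne_eq, IntermediateField.finrank_eq_one_iff]
      exact hlt.ne'
    rcases (Nat.prime_two.eq_one_or_self_of_dvd _ hdvd) with h | h
    · exact absurd h hne1
    · exact h
  refine ⟨hcard2, fun hQ => ?_⟩
  have hbot : K₁ ⊓ K₂ = ⊥ := by
    by_contra h
    have hlt : ⊥ < K₁ ⊓ K₂ := bot_lt_iff_ne_bot.2 h
    exact hQ (K₁ ⊓ K₂) (K₁ ⊓ K₂) inf_le_left inf_le_right (hcard2 hlt) (hcard2 hlt) rfl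
  refine ⟨hbot, ?_⟩
  haveI : FiniteDimensional k ↥(K₁ ⊔ K₂) := IntermediateField.finiteDimensional_sup K₁ K₂
  set L' := IntermediateField.extendScalars (le_sup_right : K₂ ≤ K₁ ⊔ K₂) with hL'
  haveI hGkL' : IsGalois k ↥L' := (inferInstance : IsGalois k ↥(K₁ ⊔ K₂))
  haveI hFDkL' : FiniteDimensional k ↥L' := (inferInstance : FiniteDimensional k ↥(K₁ ⊔ K₂))
  haveI : IsGalois ↥K₂ ↥L' := IsGalois.tower_top_of_isGalois k ↥K₂ ↥L'
  haveI : FiniteDimensional ↥K₂ ↥L' := FiniteDimensional.right k ↥K₂ ↥L'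
  letI : Algebra ↥K₁ ↥L' :=
    (IntermediateField.inclusion (le_sup_left : K₁ ≤ K₁ ⊔ K₂)).toRingHom.toAlgebra
  letI : IsScalarTower k ↥K₁ ↥L' := IsScalarTower.of_algebraMap_eq (fun x => rfl)
  let ρ : (↥L' ≃ₐ[↥K₂] ↥L') →* (↥L' ≃ₐ[k] ↥L') :=
    MonoidHom.mk' (fun σ => AlgEquiv.restrictScalars k σ) (fun a b => rfl)
  let φ : (↥L' ≃ₐ[↥K₂] ↥L') →* (↥K₁ ≃ₐ[k] ↥K₁) :=
    (AlgEquiv.restrictNormalHom (F := k) (K₁ := ↥L') ↥K₁).comp ρ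
  -- key compatibility: for x : K₁ viewed inside L', φ σ agrees with σ
  have hcompat : ∀ (σ : ↥L' ≃ₐ[↥K₂] ↥L') (x : ↥K₁),
      ((φ σ) x : Ω) = ((ρ σ) (algebraMap ↥K₁ ↥L' x) : Ω) := by
    intro σ x
    have h10 : (algebraMap ↥K₁ ↥L') ((φ σ) x) = (ρ σ) (algebraMap ↥K₁ ↥L' x) :=
      AlgEquiv.restrictNormal_commutes (ρ σ) ↥K₁ x
    calc ((φ σ) x : Ω) = ((algebraMap ↥K₁ ↥L') ((φ σ) x) : Ω) := rfl
      _ = ((ρ σ) (algebraMap ↥K₁ ↥L' x) : Ω) := by rw [h10]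
  -- surjectivity of φ via the Galois correspondence
  have hfixed : IntermediateField.fixedField φ.range = ⊥ := by
    refine le_antisymm ?_ bot_le
    intro x hx
    have hxK₂ : (x : Ω) ∈ K₂ := by
      set xL : ↥L' := algebraMap ↥K₁ ↥L' x with hxL
      have hfix : ∀ σ : (↥L' ≃ₐ[↥K₂] ↥L'), σ xL = xL := by
        intro σ
        have h9 : (φ σ) x = x := hx ⟨φ σ, ⟨σ, rfl⟩⟩
        apply Subtype.ext
        calc (σ xL : Ω) = ((ρ σ) xL : Ω) := rfl
          _ = ((φ σ) x : Ω) := (hcompat σ x).symm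
          _ = (x : Ω) := by rw [h9]
          _ = (xL : Ω) := rfl
      have h11 : xL ∈ (⊥ : IntermediateField ↥K₂ ↥L') := by
        rw [← IsGalois.fixedField_fixingSubgroup (⊥ : IntermediateField ↥K₂ ↥L')]
        exact fun g => hfix g
      rw [IntermediateField.mem_bot] at h11
      obtain ⟨y, hy⟩ := h11
      have hcoe : (xL : Ω) = (y : Ω) := by rw [← hy]; rfl
      have : (x : Ω) = (y : Ω) := hcoe
      rw [this]
      exact y.2
    have hxbot : (x : Ω) ∈ (⊥ : IntermediateField k Ω) := hbot ▸ ⟨x.2, hxK₂⟩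
    rw [IntermediateField.mem_bot] at hxbot
    obtain ⟨y, hy⟩ := hxbot
    rw [IntermediateField.mem_bot]
    exact ⟨y, Subtype.ext (by rw [← hy]; rfl)⟩
  have hrange : φ.range = ⊤ := by
    rw [← IntermediateField.fixingSubgroup_fixedField φ.range, hfixed]
    rw [eq_top_iff]
    intro σ _
    rw [IntermediateField.mem_fixingSubgroup_iff]
    intro x hxmem
    rw [IntermediateField.mem_bot] at hxmem
    obtain ⟨y, hy⟩ := hxmem
    rw [← hy]
    exact σ.commutes y
  have hsurj : Function.Surjective φ := MonoidHom.range_eq_top.1 hrange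
  have hcardle : Fintype.card (↥L' ≃ₐ[↥K₂] ↥L') ≤ Fintype.card (↥K₁ ≃ₐ[k] ↥K₁) := by
    rw [← Nat.card_eq_fintype_card, ← Nat.card_eq_fintype_card, IsGalois.card_aut_eq_finrank, IsGalois.card_aut_eq_finrank]
    have h7 : Module.finrank k ↥K₂ * Module.finrank ↥K₂ ↥L' = Module.finrank k ↥(K₁ ⊔ K₂) :=
      Module.finrank_mul_finrank k ↥K₂ ↥L'
    have h12 : Module.finrank k ↥(K₁ ⊔ K₂) ≤ Module.finrank k ↥K₁ * Module.finrank k ↥K₂ :=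
      IntermediateField.finrank_sup_le K₁ K₂
    have hpos : 0 < Module.finrank k ↥K₂ := Module.finrank_pos
    have : Module.finrank k ↥K₂ * Module.finrank ↥K₂ ↥L' ≤
        Module.finrank k ↥K₂ * Module.finrank k ↥K₁ := by
      rw [h7]; exact h12.trans_eq (mul_comm _ _)
    exact Nat.le_of_mul_le_mul_left this hpos
  have hbij : Function.Bijective φ :=
    (Fintype.bijective_iff_surjective_and_card φ).2
      ⟨hsurj, le_antisymm hcardle (Fintype.card_le_of_surjective φ hsurj)⟩
  exact ⟨(MulEquiv.ofBijective φ hbij).trans e₁⟩
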